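/- Let φ = (1+√5)/2, g the {0,1}-valued function with g(0)=1, g(1)=0, and g(n) = 1 - g(m) if ⌊nφ⌋ = ⌊m(φ+1)⌋ + 1 for some m, else g(n) = 1; and set b₁(n) = ⌊nφ⌋ + g(n) - 1, b₂(n) = ⌊n(φ+1)⌋ + g(n). If positive integers n, m satisfy ⌊nφ⌋ = ⌊(n-1)φ⌋ + 1 = ⌊m(φ+1)⌋ + 2, then either (i) b₁(n) = ⌊nφ⌋, b₁(n-1) = ⌊nφ⌋ - 1, and b₂(m) < b₁(n-1) < b₁(n) < b₂(m+1), or (ii) b₁(n) = ⌊nφ⌋, b₂(m) = ⌊nφ⌋ - 1, and b₁(n-1) < b₂(m) < b₁(n) < b₂(m+1). -/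

import Mathlib

noncomputable def phi : ℝ := (1 + Real.sqrt 5) / 2

/-- The recursive specification of the {0,1}-valued function g. -/
def gSpec (g : ℕ → ℕ) : Prop :=
  g 0 = 1 ∧ g 1 = 0 ∧ (∀ n, g n ≤ 1) ∧
  ∀ n : ℕ, 2 ≤ n →
    (∀ m : ℕ, ⌊(n : ℝ) * phi⌋ = ⌊(m : ℝ) * (phi + 1)⌋ + 1 → g n = 1 - g m) ∧
    ((¬ ∃ m : ℕ, ⌊(n : ℝ) * phi⌋ = ⌊(m : ℝ) * (phi + 1)⌋ + 1) → g n = 1)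

noncomputable def b1 (g : ℕ → ℕ) (n : ℕ) : ℤ := ⌊(n : ℝ) * phi⌋ + g n - 1

noncomputable def b2 (g : ℕ → ℕ) (n : ℕ) : ℤ := ⌊(n : ℝ) * (phi + 1)⌋ + g n

/-!
Since φ + 1 > 2, consecutive terms of the Beatty sequence ⌊k(φ+1)⌋ differ by at least 2. Hence
⌊nφ⌋ - 1 = ⌊m(φ+1)⌋ + 1 is not itself of the form ⌊k(φ+1)⌋ + 1, so g(n) = 1, while
⌊(n-1)φ⌋ = ⌊m(φ+1)⌋ + 1 gives g(n-1) = 1 - g(m) by the recursion. Moreover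
⌊(m+1)(φ+1)⌋ ≥ ⌊m(φ+1)⌋ + 2 = ⌊nφ⌋, and equality is ruled out by Rayleigh's theorem
(1/φ + 1/(φ+1) = 1, so the two Beatty sequences are disjoint). The cases g(m) = 0 and g(m) = 1
are then (i) and (ii).
-/

open Real goldenRatio

theorem phi_eq_goldenRatio : phi = φ := rfl

theorem Irrational.floor_mul_ne_floor_mul_of_holderConjugate {r s : ℝ}
    (hrs : r.HolderConjugate s) (hr : Irrational r) {j k : ℤ} (hj : 0 < j) (hk : 0 < k) :
    ⌊j * r⌋ ≠ ⌊k * s⌋ := by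
  intro h
  have hpos : ⌊j * r⌋ ∈ {n : ℤ | 0 < n} :=
    Int.floor_pos.2 (one_le_mul_of_one_le_of_one_le (by exact_mod_cast hj) hrs.lt.le)
  rw [← hr.beattySeq_symmDiff_beattySeq_pos hrs, Set.mem_symmDiff] at hpos
  have hjr : ⌊j * r⌋ ∈ {beattySeq r k | k > 0} := ⟨j, hj, rfl⟩
  have hks : ⌊j * r⌋ ∈ {beattySeq s k | k > 0} := ⟨k, hk, h.symm⟩
  tauto

theorem floor_add_two_le_floor_add {x r : ℝ} (hr : 2 ≤ r) : ⌊x⌋ + 2 ≤ ⌊x + r⌋ := by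
  rw [← Int.floor_add_intCast]; exact Int.floor_mono (by push_cast; linarith)

theorem floor_mul_ne_floor_mul_add_one {r : ℝ} (hr : 2 ≤ r) (a b : ℕ) :
    ⌊a * r⌋ ≠ ⌊b * r⌋ + 1 := by
  rcases le_or_gt a b with hab | hab
  · have : ⌊a * r⌋ ≤ ⌊b * r⌋ := Int.floor_mono (by gcongr)
    omega
  · have hba : (b : ℝ) + 1 ≤ a := by exact_mod_cast hab
    have : ⌊b * r⌋ + 2 ≤ ⌊a * r⌋ := (floor_add_two_le_floor_add hr).trans
      (Int.floor_mono (by nlinarith))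
    omega

theorem holderConjugate_goldenRatio : HolderConjugate φ (φ + 1) where
  inv_add_inv_eq_inv := by
    rw [← goldenRatio_sq, ← inv_pow, inv_goldenRatio, neg_sq, goldenConj_sq, inv_one]
    ring
  left_pos := goldenRatio_pos
  right_pos := by linarith [goldenRatio_pos]

theorem two_le_of_two_le_floor_natCast_mul_goldenRatio {k : ℕ} (h : 2 ≤ ⌊k * φ⌋) :
    2 ≤ k := by
  by_contra! hk
  have hk_le : (k : ℝ) ≤ 1 := by exact_mod_cast Nat.le_of_lt_succ hk
  have : ⌊k * φ⌋ < 2 :=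
    Int.floor_lt.2 (by push_cast; nlinarith [goldenRatio_pos, goldenRatio_lt_two])
  omega

theorem two_le_floor_natCast_mul_goldenRatio_add_one {m : ℕ} (hm : 1 ≤ m) :
    2 ≤ ⌊m * (φ + 1)⌋ := by
  have hm_le : (1 : ℝ) ≤ m := by exact_mod_cast hm
  exact Int.le_floor.2 (by push_cast; nlinarith [one_lt_goldenRatio])

theorem stmt14_general (g : ℕ → ℕ) (hg : gSpec g) (n m : ℕ) (hm : 1 ≤ m)
    (h1 : ⌊(n : ℝ) * phi⌋ = ⌊((n - 1 : ℕ) : ℝ) * phi⌋ + 1)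
    (h2 : ⌊(n : ℝ) * phi⌋ = ⌊(m : ℝ) * (phi + 1)⌋ + 2) :
    (b1 g n = ⌊(n : ℝ) * phi⌋ ∧ b1 g (n - 1) = ⌊(n : ℝ) * phi⌋ - 1 ∧
      b2 g m < b1 g (n - 1) ∧ b1 g (n - 1) < b1 g n ∧ b1 g n < b2 g (m + 1)) ∨
    (b1 g n = ⌊(n : ℝ) * phi⌋ ∧ b2 g m = ⌊(n : ℝ) * phi⌋ - 1 ∧
      b1 g (n - 1) < b2 g m ∧ b2 g m < b1 g n ∧ b1 g n < b2 g (m + 1)) := by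
  obtain ⟨-, -, hg_le, hg_rec⟩ := hg
  simp only [b1, b2, phi_eq_goldenRatio] at h1 h2 hg_rec ⊢
  have hφ : 2 ≤ φ + 1 := by linarith [one_lt_goldenRatio]
  have hm_floor := two_le_floor_natCast_mul_goldenRatio_add_one hm
  have hn : 2 ≤ n - 1 := two_le_of_two_le_floor_natCast_mul_goldenRatio (by omega)
  have hgn : g n = 1 := (hg_rec n (by omega)).2 fun ⟨k, hk⟩ ↦
    floor_mul_ne_floor_mul_add_one hφ k m (by omega)
  have hgn1 : g (n - 1) = 1 - g m := (hg_rec (n - 1) hn).1 m (by omega)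
  have hnext : ⌊(n : ℝ) * φ⌋ < ⌊((m : ℝ) + 1) * (φ + 1)⌋ := by
    refine lt_of_le_of_ne ?_ ?_
    · have := floor_add_two_le_floor_add (x := m * (φ + 1)) hφ
      rw [add_one_mul]
      omega
    · exact_mod_cast goldenRatio_irrational.floor_mul_ne_floor_mul_of_holderConjugate
        holderConjugate_goldenRatio (j := n) (k := m + 1) (by omega) (by omega)
  have hgm := hg_le m
  simp only [hgn, hgn1, Nat.cast_add, Nat.cast_one]
  omega

theorem stmt14 (g : ℕ → ℕ) (hg : gSpec g) (n m : ℕ) (hn : 1 ≤ n) (hm : 1 ≤ m)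
    (h1 : ⌊(n : ℝ) * phi⌋ = ⌊((n - 1 : ℕ) : ℝ) * phi⌋ + 1)
    (h2 : ⌊(n : ℝ) * phi⌋ = ⌊(m : ℝ) * (phi + 1)⌋ + 2) :
    (b1 g n = ⌊(n : ℝ) * phi⌋ ∧ b1 g (n - 1) = ⌊(n : ℝ) * phi⌋ - 1 ∧
      b2 g m < b1 g (n - 1) ∧ b1 g (n - 1) < b1 g n ∧ b1 g n < b2 g (m + 1)) ∨
    (b1 g n = ⌊(n : ℝ) * phi⌋ ∧ b2 g m = ⌊(n : ℝ) * phi⌋ - 1 ∧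
      b1 g (n - 1) < b2 g m ∧ b2 g m < b1 g n ∧ b1 g n < b2 g (m + 1)) :=
  stmt14_general g hg n m hm h1 h2
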